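/- The generalized hypergeometric series ₃F₂(3/2, 2, 2; 5/3, 13/6; 1/4) equals (14/2187)·( 216 + √3·(18 + 5·3^{1/3})·π − 30·3^{5/6}·arctan((2 + 3^{1/3})/3^{5/6}) + 54·ln 2 + 30·3^{1/3}·ln(3 − 3^{2/3}) − 15·3^{1/3}·ln(3·(3 + 3^{1/3} + 3^{2/3})) ). -/

import Mathlib

/-!
By the Beta integral, `(4/3)_k · ∫₀¹ (1 - u³)^k du = k!`, and the duplication formula
`(a)_{2n} = 4ⁿ (a/2)_n ((a+1)/2)_n` turns the `n`-th term of the series into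
`(14/9) (n+1) 4⁻ⁿ ∫₀¹ (1 - u³)^{2n+2} du`. Summing under the integral sign gives the
integrand `16 x² / (4 - x²)²` at `x = 1 - u³`; in `t = u³` it decomposes into partial
fractions with denominators `(1 + t)^k` and `(t - 3)^k`, `k = 1, 2`. A reduction formula
removes the squares, and `1 / (1 + u³)` has an elementary antiderivative, which after
rescaling `u` by `-3^{1/3}` also integrates `1 / (u³ - 3)`.
-/

open Real

noncomputable def poch (a : ℝ) (n : ℕ) : ℝ := Polynomial.eval a (ascPochhammer ℝ n)

open intervalIntegral
open scoped Nat

lemma poch_zero (a : ℝ) : poch a 0 = 1 := by simp [poch]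

lemma poch_succ_right (a : ℝ) (n : ℕ) : poch a (n + 1) = poch a n * (a + n) := by
  simp [poch, ascPochhammer_succ_right]

lemma poch_succ_left (a : ℝ) (n : ℕ) : poch a (n + 1) = a * poch (a + 1) n := by
  simp [poch, ascPochhammer_succ_left, Polynomial.eval_comp]

lemma poch_one_left (n : ℕ) : poch 1 n = n ! := ascPochhammer_eval_one ℝ n

lemma poch_pos {a : ℝ} (ha : 0 < a) (n : ℕ) : 0 < poch a n := by
  induction n with
  | zero => simp [poch_zero]
  | succ n ih => rw [poch_succ_right]; positivity

lemma poch_two_mul (a : ℝ) (n : ℕ) :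
    poch a (2 * n) = 4 ^ n * poch (a / 2) n * poch ((a + 1) / 2) n := by
  induction n with
  | zero => simp [poch_zero]
  | succ n ih =>
    rw [show 2 * (n + 1) = 2 * n + 1 + 1 by ring, poch_succ_right, poch_succ_right, ih,
      poch_succ_right, poch_succ_right]
    push_cast
    ring

lemma integral_one_sub_pow_pow_succ {m : ℕ} (hm : m ≠ 0) (k : ℕ) :
    (m * (k + 1) + 1 : ℝ) * ∫ u in (0:ℝ)..1, (1 - u ^ m) ^ (k + 1)
      = m * (k + 1) * ∫ u in (0:ℝ)..1, (1 - u ^ m) ^ k := by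
  have hderiv : ∀ u : ℝ, HasDerivAt (fun u : ℝ => u * (1 - u ^ m) ^ (k + 1))
      ((m * (k + 1) + 1) * (1 - u ^ m) ^ (k + 1) - m * (k + 1) * (1 - u ^ m) ^ k) u := by
    intro u
    refine ((hasDerivAt_id u).mul
      (((hasDerivAt_pow m u).const_sub 1).fun_pow (k + 1))).congr_deriv ?_
    rw [← mul_pow_sub_one hm u]
    simp only [id_eq, Nat.add_sub_cancel]
    push_cast
    ring
  have hint (j : ℕ) :
      IntervalIntegrable (fun u : ℝ => (1 - u ^ m) ^ j) MeasureTheory.volume 0 1 :=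
    (by fun_prop : Continuous fun u : ℝ => (1 - u ^ m) ^ j).intervalIntegrable _ _
  have hFTC := integral_eq_sub_of_hasDerivAt (fun u _ => hderiv u)
    (((hint _).const_mul _).sub ((hint _).const_mul _))
  rw [integral_sub ((hint _).const_mul _) ((hint _).const_mul _), integral_const_mul,
    integral_const_mul] at hFTC
  simpa [sub_eq_zero] using hFTC

lemma poch_mul_integral_one_sub_pow_pow {m : ℕ} (hm : m ≠ 0) (k : ℕ) :
    poch (1 + 1 / m) k * ∫ u in (0:ℝ)..1, (1 - u ^ m) ^ k = k ! := by
  induction k with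
  | zero => simp [poch_zero]
  | succ k ih =>
    have hrec := integral_one_sub_pow_pow_succ hm k
    have hm' : (m : ℝ) ≠ 0 := by exact_mod_cast hm
    rw [poch_succ_right, Nat.factorial_succ]
    push_cast
    rw [← ih]
    linear_combination (norm := skip) poch (1 + 1 / m) k / m * hrec
    field_simp
    ring

lemma hypergeometric_term_eq (n : ℕ) :
    poch (3/2) n * poch 2 n * poch 2 n / (poch (5/3) n * poch (13/6) n * n !) * (1/4) ^ n
      = 14/9 * ((n + 1) * (1/4) ^ n * ∫ u in (0:ℝ)..1, (1 - u ^ 3) ^ (2 * n + 2)) := by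
  have hbeta := poch_mul_integral_one_sub_pow_pow (m := 3) (by norm_num) (2 * n + 2)
  have hden :
      poch (1 + 1 / (3 : ℕ)) (2 * n + 2) = 28/9 * 4 ^ n * poch (5/3) n * poch (13/6) n := by
    rw [poch_succ_left, poch_succ_left, poch_two_mul]; norm_num; ring
  have hfac : ((2 * n + 2)! : ℝ) = 2 * 4 ^ n * poch (3/2) n * poch 2 n := by
    rw [← poch_one_left, poch_succ_left, poch_succ_left, poch_two_mul]; norm_num; ring
  have htwo : poch 2 n = (n + 1) * n ! := by
    rw [← one_add_one_eq_two, ← one_mul (poch _ n), ← poch_succ_left, poch_one_left,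
      Nat.factorial_succ]
    push_cast; ring
  have h53 := poch_pos (a := 5/3) (by norm_num) n
  have h136 := poch_pos (a := 13/6) (by norm_num) n
  have hn : (0 : ℝ) < n ! := by exact_mod_cast Nat.factorial_pos n
  rw [hden, hfac, htwo] at hbeta
  rw [htwo]
  have hcancel :
      28/9 * poch (5/3) n * poch (13/6) n * ∫ u in (0:ℝ)..1, (1 - u ^ 3) ^ (2 * n + 2)
        = 2 * poch (3/2) n * ((n + 1) * n !) :=
    mul_left_cancel₀ (pow_ne_zero n four_ne_zero) (by linear_combination hbeta)
  field_simp
  linear_combination (-9/2) * hcancel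

lemma hasSum_succ_mul_quarter_pow_mul_pow {x : ℝ} (hx : |x| < 2) :
    HasSum (fun n : ℕ => ((n : ℝ) + 1) * (1/4) ^ n * x ^ (2 * n + 2))
      (16 * x ^ 2 / (4 - x ^ 2) ^ 2) := by
  have hr : ‖x ^ 2 / 4‖ < 1 := by
    rw [Real.norm_eq_abs, abs_of_nonneg (by positivity), div_lt_one four_pos, ← sq_abs]
    nlinarith [abs_nonneg x]
  have h4 : (4 : ℝ) - x ^ 2 ≠ 0 := by nlinarith [sq_abs x, abs_nonneg x]
  have hsum : 16 * x ^ 2 / (4 - x ^ 2) ^ 2 = x ^ 2 * (1 / (1 - x ^ 2 / 4) ^ (1 + 1)) := by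
    field_simp
    ring
  rw [hsum]
  refine ((hasSum_choose_mul_geometric_of_norm_lt_one 1 hr).mul_left (x ^ 2)).congr_fun
    fun n => ?_
  rw [Nat.choose_one_right, div_eq_mul_one_div (x ^ 2), mul_pow, pow_add, pow_mul]
  push_cast
  ring

lemma hasSum_integral_one_sub_cube_pow :
    HasSum
      (fun n : ℕ => ((n : ℝ) + 1) * (1/4) ^ n * ∫ u in (0:ℝ)..1, (1 - u ^ 3) ^ (2 * n + 2))
      (∫ u in (0:ℝ)..1, 16 * (1 - u ^ 3) ^ 2 / (4 - (1 - u ^ 3) ^ 2) ^ 2) := by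
  have hgeom := hasSum_choose_mul_geometric_of_norm_lt_one 1 (r := (1/4 : ℝ)) (by norm_num)
  simp only [Nat.choose_one_right, Nat.cast_add, Nat.cast_one] at hgeom
  have hle : ∀ u ∈ Set.uIoc (0:ℝ) 1, |1 - u ^ 3| ≤ 1 := by
    intro u hu
    rw [Set.uIoc_of_le zero_le_one] at hu
    have : u ^ 3 ≤ 1 := pow_le_one₀ hu.1.le hu.2
    rw [abs_le]; constructor <;> nlinarith [pow_pos hu.1 3]
  simp_rw [← integral_const_mul]
  refine hasSum_integral_of_dominated_convergence (fun n _ => ((n : ℝ) + 1) * (1/4) ^ n)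
    (fun n => (by fun_prop : Continuous _).aestronglyMeasurable) (fun n => ?_)
    (.of_forall fun _ _ => hgeom.summable) intervalIntegrable_const
    (.of_forall fun u hu => hasSum_succ_mul_quarter_pow_mul_pow (by linarith [hle u hu]))
  refine .of_forall fun u hu => ?_
  rw [norm_mul, norm_of_nonneg (by positivity), norm_pow]
  exact mul_le_of_le_one_right (by positivity)
    (pow_le_one₀ (norm_nonneg _) (hle u hu))

noncomputable def cubeAntideriv (u : ℝ) : ℝ :=
  log (1 + u) / 3 - log (u ^ 2 - u + 1) / 6 + √3 / 3 * arctan ((2 * u - 1) / √3)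

lemma hasDerivAt_cubeAntideriv {u : ℝ} (hu : -1 < u) :
    HasDerivAt cubeAntideriv (1 + u ^ 3)⁻¹ u := by
  have h1 : 1 + u ≠ 0 := by linarith
  have h2 : u ^ 2 - u + 1 ≠ 0 := by nlinarith [sq_nonneg (2 * u - 1)]
  have h3 : (√3) ^ 2 = 3 := sq_sqrt (by norm_num)
  have hlin : HasDerivAt (fun u => 1 + u) 1 u := (hasDerivAt_id u).const_add 1
  have hquad : HasDerivAt (fun u => u ^ 2 - u + 1) (2 * u - 1) u := by
    simpa using ((hasDerivAt_pow 2 u).sub (hasDerivAt_id u)).add_const 1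
  have hatan : HasDerivAt (fun u => (2 * u - 1) / √3) (2 / √3) u := by
    simpa using (((hasDerivAt_id u).const_mul 2).sub_const 1).div_const √3
  unfold cubeAntideriv
  refine ((((hlin.log h1).div_const 3).sub ((hquad.log h2).div_const 6)).add
    (hatan.arctan.const_mul (√3 / 3))).congr_deriv ?_
  have h4 : (1 : ℝ) + u ^ 3 = (1 + u) * (u ^ 2 - u + 1) := by ring
  have h5 : 1 + ((2 * u - 1) / √3) ^ 2 = 4 / 3 * (u ^ 2 - u + 1) := by
    rw [div_pow, h3]; ring
  have h2' : u * (u - 1) + 1 ≠ 0 := by rwa [show u * (u - 1) + 1 = u ^ 2 - u + 1 by ring]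
  rw [h5, h4]
  field_simp
  ring

lemma cubeAntideriv_zero : cubeAntideriv 0 = -(√3 * π / 18) := by
  simp only [cubeAntideriv]
  rw [show (2 * 0 - 1) / √3 = -(√3)⁻¹ by ring, arctan_neg, arctan_inv_sqrt_three]
  norm_num
  ring

lemma cubeAntideriv_one : cubeAntideriv 1 = log 2 / 3 + √3 * π / 18 := by
  simp only [cubeAntideriv]
  rw [show (2 * 1 - 1) / √3 = (√3)⁻¹ by ring, arctan_inv_sqrt_three]
  norm_num
  ring

lemma integral_inv_cube_add_cube {c : ℝ} (hc : 0 < c ∨ c < -1) :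
    ∫ u in (0:ℝ)..1, (c ^ 3 + u ^ 3)⁻¹
      = (cubeAntideriv c⁻¹ - cubeAntideriv 0) / c ^ 2 := by
  have hc0 : c ≠ 0 := by rcases hc with hc | hc <;> [exact hc.ne'; linarith]
  have hdom : ∀ u ∈ Set.uIcc (0:ℝ) 1, -1 < u / c := by
    intro u hu
    rw [Set.uIcc_of_le zero_le_one] at hu
    rcases hc with hc | hc
    · linarith [div_nonneg hu.1 hc.le]
    · rw [lt_div_iff_of_neg (by linarith)]; linarith [hu.2]
  have hne : ∀ u ∈ Set.uIcc (0:ℝ) 1, c ^ 3 + u ^ 3 ≠ 0 := by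
    intro u hu
    have hv := hdom u hu
    have : c ^ 3 + u ^ 3 = c ^ 3 * (1 + (u / c) ^ 3) := by field_simp
    rw [this]
    exact mul_ne_zero (pow_ne_zero 3 hc0)
      (by nlinarith [sq_nonneg (u / c), sq_nonneg (u / c - 1)])
  have hderiv : ∀ u ∈ Set.uIcc (0:ℝ) 1,
      HasDerivAt (fun u => cubeAntideriv (u / c) / c ^ 2) (c ^ 3 + u ^ 3)⁻¹ u := by
    intro u hu
    refine (((hasDerivAt_cubeAntideriv (hdom u hu)).comp u
      ((hasDerivAt_id u).div_const c)).div_const (c ^ 2)).congr_deriv ?_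
    have h := hne u hu
    field_simp
  rw [integral_eq_sub_of_hasDerivAt hderiv
    (ContinuousOn.intervalIntegrable (by fun_prop (disch := exact hne)))]
  simp only [one_div, zero_div]
  ring

lemma intervalIntegrable_inv_pow_add_cube {a : ℝ}
    (h : ∀ u ∈ Set.uIcc (0:ℝ) 1, a + u ^ 3 ≠ 0) (k : ℕ) :
    IntervalIntegrable (fun u => ((a + u ^ 3) ^ k)⁻¹) MeasureTheory.volume 0 1 :=
  (((continuousOn_const.add (continuousOn_pow 3)).pow k).inv₀
    fun u hu => pow_ne_zero k (h u hu)).intervalIntegrable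

lemma integral_inv_sq_add_cube {a : ℝ} (ha : a ≠ 0)
    (h : ∀ u ∈ Set.uIcc (0:ℝ) 1, a + u ^ 3 ≠ 0) :
    ∫ u in (0:ℝ)..1, ((a + u ^ 3) ^ 2)⁻¹
      = (3 * a * (a + 1))⁻¹ + 2 / (3 * a) * ∫ u in (0:ℝ)..1, (a + u ^ 3)⁻¹ := by
  have h1 : a + 1 ≠ 0 := by simpa using h 1 (by simp)
  have hint1 : IntervalIntegrable (fun u : ℝ => (a + u ^ 3)⁻¹) MeasureTheory.volume 0 1 := by
    simpa using intervalIntegrable_inv_pow_add_cube h 1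
  have hint2 := intervalIntegrable_inv_pow_add_cube h 2
  have hderiv : ∀ u ∈ Set.uIcc (0:ℝ) 1, HasDerivAt (fun u => u / (3 * a * (a + u ^ 3)))
      (((a + u ^ 3) ^ 2)⁻¹ - 2 / (3 * a) * (a + u ^ 3)⁻¹) u := by
    intro u hu
    have hu' := h u hu
    refine ((hasDerivAt_id u).div (((hasDerivAt_pow 3 u).const_add a).const_mul (3 * a))
      (by simp [ha, hu'])).congr_deriv ?_
    simp only [id_eq]
    field_simp
    ring
  have hFTC := integral_eq_sub_of_hasDerivAt hderiv (hint2.sub (hint1.const_mul _))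
  rw [integral_sub hint2 (hint1.const_mul _), integral_const_mul] at hFTC
  rw [eq_add_of_sub_eq hFTC]
  field_simp
  ring

lemma one_add_cube_ne_zero_on_uIcc : ∀ u ∈ Set.uIcc (0:ℝ) 1, 1 + u ^ 3 ≠ 0 := by
  intro u hu
  rw [Set.uIcc_of_le zero_le_one] at hu
  exact (add_pos_of_pos_of_nonneg one_pos (pow_nonneg hu.1 3)).ne'

lemma neg_three_add_cube_ne_zero_on_uIcc : ∀ u ∈ Set.uIcc (0:ℝ) 1, -3 + u ^ 3 ≠ 0 := by
  intro u hu
  rw [Set.uIcc_of_le zero_le_one] at hu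
  have := pow_le_one₀ hu.1 hu.2 (n := 3)
  linarith

lemma integral_partial_fractions :
    ∫ u in (0:ℝ)..1, 16 * (1 - u ^ 3) ^ 2 / (4 - (1 - u ^ 3) ^ 2) ^ 2
      = 8/9 + 2/3 * (∫ u in (0:ℝ)..1, (1 + u ^ 3)⁻¹)
          + 10/9 * ∫ u in (0:ℝ)..1, (-3 + u ^ 3)⁻¹ := by
  have hA := intervalIntegrable_inv_pow_add_cube one_add_cube_ne_zero_on_uIcc
  have hB := intervalIntegrable_inv_pow_add_cube neg_three_add_cube_ne_zero_on_uIcc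
  have hA1 := hA 1
  have hB1 := hB 1
  simp only [pow_one] at hA1 hB1
  have hpf : Set.EqOn (fun u : ℝ => 16 * (1 - u ^ 3) ^ 2 / (4 - (1 - u ^ 3) ^ 2) ^ 2)
      (fun u => 4 * ((1 + u ^ 3) ^ 2)⁻¹ + 4 * ((-3 + u ^ 3) ^ 2)⁻¹
        - 2 * (1 + u ^ 3)⁻¹ + 2 * (-3 + u ^ 3)⁻¹) (Set.uIcc 0 1) := by
    intro u hu
    have h1 := one_add_cube_ne_zero_on_uIcc u hu
    have h3 := neg_three_add_cube_ne_zero_on_uIcc u hu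
    have h4 : 4 - (1 - u ^ 3) ^ 2 = -((1 + u ^ 3) * (-3 + u ^ 3)) := by ring
    simp only [h4]
    field_simp
    ring
  rw [integral_congr hpf, integral_add (((hA 2).const_mul 4).add ((hB 2).const_mul 4)
      |>.sub (hA1.const_mul 2)) (hB1.const_mul 2),
    integral_sub (((hA 2).const_mul 4).add ((hB 2).const_mul 4)) (hA1.const_mul 2),
    integral_add ((hA 2).const_mul 4) ((hB 2).const_mul 4), integral_const_mul,
    integral_const_mul, integral_const_mul, integral_const_mul,
    integral_inv_sq_add_cube one_ne_zero one_add_cube_ne_zero_on_uIcc,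
    integral_inv_sq_add_cube (by norm_num) neg_three_add_cube_ne_zero_on_uIcc]
  norm_num
  ring

lemma integral_inv_one_add_cube :
    ∫ u in (0:ℝ)..1, (1 + u ^ 3)⁻¹ = log 2 / 3 + √3 * π / 9 := by
  have h := integral_inv_cube_add_cube (c := 1) (Or.inl one_pos)
  rw [one_pow, inv_one, cubeAntideriv_one, cubeAntideriv_zero] at h
  rw [h]
  ring

lemma integral_inv_neg_three_add_cube :
    ∫ u in (0:ℝ)..1, (-3 + u ^ 3)⁻¹
      = (3:ℝ) ^ ((1:ℝ)/3) / 9 * log (3 - (3:ℝ) ^ ((2:ℝ)/3))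
        - (3:ℝ) ^ ((1:ℝ)/3) / 18 * log (3 * (3 + (3:ℝ) ^ ((1:ℝ)/3) + (3:ℝ) ^ ((2:ℝ)/3)))
        - (3:ℝ) ^ ((5:ℝ)/6) / 9 * arctan ((2 + (3:ℝ) ^ ((1:ℝ)/3)) / (3:ℝ) ^ ((5:ℝ)/6))
        + √3 * (3:ℝ) ^ ((1:ℝ)/3) * π / 54 := by
  set c : ℝ := (3:ℝ) ^ ((1:ℝ)/3) with hc
  have hc3 : c ^ 3 = 3 := by
    rw [hc, ← rpow_natCast, ← rpow_mul (by norm_num)]; norm_num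
  have hc1 : 1 < c := one_lt_rpow (by norm_num) (by norm_num)
  have h23 : (3:ℝ) ^ ((2:ℝ)/3) = c ^ 2 := by
    rw [hc, ← rpow_natCast, ← rpow_mul (by norm_num)]; norm_num
  have h56 : (3:ℝ) ^ ((5:ℝ)/6) = c * √3 := by
    rw [hc, sqrt_eq_rpow, ← rpow_add (by norm_num)]; norm_num
  have h := integral_inv_cube_add_cube (c := -c) (Or.inr (by linarith))
  rw [show (-c) ^ 3 = -3 by rw [Odd.neg_pow (by decide), hc3]] at h
  have hc0 : c ≠ 0 := by positivity
  have hsq : 3 - c ^ 2 ≠ 0 := by nlinarith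
  have hX : 3 * (3 + c + c ^ 2) ≠ 0 := by positivity
  have e1 : 1 + (-c)⁻¹ = (3 - c ^ 2) / 3 := by
    field_simp
    linear_combination hc3
  have e2 : (-c)⁻¹ ^ 2 - (-c)⁻¹ + 1 = 3 * (3 + c + c ^ 2) / 9 := by
    field_simp
    linear_combination (-3 - 3 * c) * hc3
  have e3 : (2 * (-c)⁻¹ - 1) / √3 = -((2 + c) / (c * √3)) := by
    field_simp
    ring
  have hinv : ((-c) ^ 2)⁻¹ = c / 3 := by
    field_simp
    linear_combination -hc3
  have hlog9 : log 9 = 2 * log 3 := by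
    rw [show (9:ℝ) = 3 ^ 2 by norm_num, log_pow]; norm_num
  rw [h, h23, h56, cubeAntideriv_zero, cubeAntideriv, e1, e2, e3, arctan_neg,
    log_div hsq (by norm_num), log_div hX (by norm_num), hlog9, div_eq_mul_inv _ ((-c) ^ 2),
    hinv]
  ring

theorem stmt_13 :
    ∑' n : ℕ, (poch (3/2) n * poch (2) n * poch (2) n) / (poch (5/3) n * poch (13/6) n * (Nat.factorial n : ℝ)) * (1/4 : ℝ) ^ n
      = 14/2187 * (216 + Real.sqrt 3 * (18 + 5 * (3:ℝ) ^ ((1:ℝ)/3)) * Real.pi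
          - 30 * (3:ℝ) ^ ((5:ℝ)/6)
              * Real.arctan ((2 + (3:ℝ) ^ ((1:ℝ)/3)) / (3:ℝ) ^ ((5:ℝ)/6))
          + 54 * Real.log 2
          + 30 * (3:ℝ) ^ ((1:ℝ)/3) * Real.log (3 - (3:ℝ) ^ ((2:ℝ)/3))
          - 15 * (3:ℝ) ^ ((1:ℝ)/3)
              * Real.log (3 * (3 + (3:ℝ) ^ ((1:ℝ)/3) + (3:ℝ) ^ ((2:ℝ)/3)))) := by
  rw [tsum_congr hypergeometric_term_eq,
    (hasSum_integral_one_sub_cube_pow.mul_left (14/9)).tsum_eq, integral_partial_fractions,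
    integral_inv_one_add_cube, integral_inv_neg_three_add_cube]
  ring
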